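/- Let T be a finite plane tree with n ≥ 2 vertices, let v_0, …, v_{2n−2} be the lexicographic enumeration of rot T, let ũ_1, …, ũ_{n−1} be the lexicographic enumeration of (rot T)°, and write H° for the height process of (rot T)° (so H°(k) = |ũ_{k+1}| for 0 ≤ k ≤ n−2 and H°(n−1) = 0) and H for the height process H_{rot T} of rot T. Set j(k) = 2k − H_T(k+1) + 1 for 0 ≤ k ≤ n−1. Then: j is strictly increasing with j(0) = 0 and j(n−1) = 2n−1; ũ_{1+k} = v_{j(k)} for all 0 ≤ k ≤ n−2; and for all 0 ≤ k ≤ n−2, on the integer interval [j(k), j(k+1)] the process H satisfies: (i) if j(k+1) = j(k)+1 then H(j(k)) = H°(k) and H(j(k)+1) = H°(k+1); (ii) if j(k+1) = j(k)+2 then H(j(k)) = H°(k) and H(j(k)+1) = H(j(k)+2) = H°(k+1); (iii) if j(k+1) > j(k)+2 then H(j(k)) = H°(k), H(j(k)+1) = H(j(k)+2) = H°(k)+1, and H is strictly decreasing on the integer interval [j(k)+2, j(k+1)] with H(j(k+1)) = H°(k+1). -/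

import Mathlib

inductive PTree : Type
  | node : List PTree → PTree

namespace PTree

instance : Inhabited PTree := ⟨node []⟩

mutual
def size : PTree → ℕ
  | node ts => 1 + sizeList ts
def sizeList : List PTree → ℕ
  | [] => 0
  | t :: ts => size t + sizeList ts
end

def deg : PTree → ℕ
  | node ts => ts.length

mutual
def degreesAux : PTree → List ℕ
  | node ts => ts.length :: degreesListAux ts
def degreesListAux : List PTree → List ℕ
  | [] => []
  | t :: ts => degreesAux t ++ degreesListAux ts
end

mutual
def heightsAux : PTree → ℕ → List ℕ
  | node ts, d => d :: heightsListAux ts (d + 1)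
def heightsListAux : List PTree → ℕ → List ℕ
  | [], _ => []
  | t :: ts, d => heightsAux t d ++ heightsListAux ts d
end

mutual
def contourAux : PTree → ℕ → List ℕ
  | node ts, d => d :: contourListAux ts (d + 1)
def contourListAux : List PTree → ℕ → List ℕ
  | [], _ => []
  | t :: ts, d => contourAux t d ++ (d - 1) :: contourListAux ts d
end

mutual
def verticesAux : PTree → List ℕ → List (List ℕ)
  | node ts, p => p :: verticesListAux ts p 0
def verticesListAux : List PTree → List ℕ → ℕ → List (List ℕ)
  | [], _, _ => []
  | t :: ts, p, i => verticesAux t (p ++ [i]) ++ verticesListAux ts p (i + 1)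
end

def vertices (T : PTree) : List (List ℕ) := verticesAux T []

/-- Height process of a plane tree. -/
def H (T : PTree) (k : ℕ) : ℕ := (heightsAux T 0).getD k 0

/-- Contour process of a plane tree. -/
def C (T : PTree) (k : ℕ) : ℕ := (contourAux T 0).getD k 0

/-- Łukasiewicz walk of a plane tree. -/
def S (T : PTree) (k : ℕ) : ℤ :=
  (((degreesAux T).take k).map (fun d => (d : ℤ) - 1)).sum

def subtreeAt : List ℕ → PTree → Option PTree
  | [], t => some t
  | i :: p, node ts => (ts[i]?).bind (subtreeAt p)

def isInternal (T : PTree) (p : List ℕ) : Bool :=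
  match subtreeAt p T with
  | some (node (_ :: _)) => true
  | _ => false

def isVertex (T : PTree) (p : List ℕ) : Bool := (subtreeAt p T).isSome

def rot : PTree → PTree
  | node [] => node []
  | node (t :: ts) => node [rot t, rot (node ts)]

mutual
def corot : PTree → PTree
  | node ts => corotAux ts (node [])
def corotAux : List PTree → PTree → PTree
  | [], acc => acc
  | t :: ts, acc => corotAux ts (node [acc, corot t])
end

mutual
def mirror : PTree → PTree
  | node ts => node (mirrorList ts)
def mirrorList : List PTree → List PTree
  | [] => []
  | t :: ts => mirrorList ts ++ [mirror t]
end

mutual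
def internalTree : PTree → PTree
  | node ts => node (internalList ts)
def internalList : List PTree → List PTree
  | [] => []
  | node [] :: ts => internalList ts
  | t :: ts => internalTree t :: internalList ts
end

def mirrorPath : PTree → List ℕ → List ℕ
  | _, [] => []
  | node ts, i :: p =>
      (ts.length - 1 - i) ::
        (match ts[i]? with
         | some t => mirrorPath t p
         | none => p)

def lexLt : List ℕ → List ℕ → Bool
  | _, [] => false
  | [], _ :: _ => true
  | a :: as, b :: bs => if a < b then true else if a = b then lexLt as bs else false

def nonRootVertices (T : PTree) : List (List ℕ) := (vertices T).tail

def internalVertices (T : PTree) : List (List ℕ) :=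
  (vertices T).filter (fun p => isInternal T p)

/-- the order-preserving identification between non-root vertices of `T` and
internal vertices of `rot T`. -/
def iota (T : PTree) (u : List ℕ) : List ℕ :=
  (internalVertices (rot T)).getD ((nonRootVertices T).idxOf u) []

/-- `L(u)`: number of edges grafted on the left of the ancestral line of `u`. -/
def Lnum (T : PTree) (u : List ℕ) : ℕ :=
  ((vertices T).filter (fun w =>
      !w.isEmpty && (w.dropLast.isPrefixOf u && w.dropLast != u)
        && !(w.isPrefixOf u && w != u) && lexLt w u)).length

/-- mirrored enumeration of `T`. -/
def mirroredEnum (T : PTree) (k : ℕ) : List ℕ :=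
  mirrorPath (mirror T) ((vertices (mirror T)).getD k [])

def descendR (T : PTree) : ℕ → List ℕ → List ℕ
  | 0, p => p
  | fuel + 1, p => if isInternal T (p ++ [1]) then descendR T fuel (p ++ [1]) else p

def ascend (visited : List (List ℕ)) : ℕ → List ℕ → List ℕ
  | 0, p => p.dropLast
  | fuel + 1, p => if p.dropLast ∈ visited then ascend visited fuel p.dropLast else p.dropLast

def rightmostSeq (T : PTree) : ℕ → List (List ℕ)
  | 0 => []
  | k + 1 =>
      let prev := rightmostSeq T k
      let next :=
        match prev.getLast? with
        | none => descendR T (size T) []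
        | some p =>
            if isInternal T (p ++ [0]) then descendR T (size T) (p ++ [0])
            else ascend prev (size T) p
      prev ++ [next]

def Hstar (T : PTree) (k : ℕ) : ℤ :=
  if k = 0 ∨ size T ≤ k then 0 else ((iota T (mirroredEnum T k)).length : ℤ)

end PTree

open PTree

/-!
Write `B = rot T`. Splitting `T = node (t :: ts)` as `rot T = node [rot t, rot (node ts)]` shows
by induction that the `k`-th internal vertex of `B` sits at position `j(k) = 2k + 1 - H_T(k+1)` of
the enumeration of `B`; since the enumeration has no repetitions, the vertices strictly between
positions `j(k)` and `j(k+1)` are leaves. The rest is a local property of the lexicographic order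
of a full binary tree: an internal vertex `v` is followed by `v0`, a leaf `w0` by its sibling `w1`,
and a leaf `w1` by a strictly shorter vertex which is again a second child. Heights are lengths of
vertices, and the height process of `(rot T)°` lists the lengths of the internal vertices of `B`.
-/

theorem List.getD_cons_map_append_map_succ {α β : Type*} (x : β) (f g : α → β)
    {l₁ : List α} (l₂ : List α) {p : ℕ} (hp : p < l₁.length) (d : β) (d' : α) :
    (x :: (l₁.map f ++ l₂.map g)).getD (p + 1) d = f (l₁.getD p d') := by
  rw [List.getD_cons_succ, List.getD_append _ _ _ _ (by simpa using hp),
    List.getD_eq_getElem _ _ (by simpa using hp), List.getD_eq_getElem _ _ hp, List.getElem_map]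

theorem List.getD_cons_map_append_map_add {α β : Type*} (x : β) (f g : α → β)
    (l₁ : List α) {l₂ : List α} {q : ℕ} (hq : q < l₂.length) (d : β) (d' : α) :
    (x :: (l₁.map f ++ l₂.map g)).getD (l₁.length + 1 + q) d = g (l₂.getD q d') := by
  rw [Nat.add_right_comm, List.getD_cons_succ, List.getD_append_right _ _ _ _ (by simp),
    List.length_map, Nat.add_sub_cancel_left, List.getD_eq_getElem _ _ (by simpa using hq),
    List.getD_eq_getElem _ _ hq, List.getElem_map]

theorem List.getD_eq_false_of_between_filter {α : Type*} {l : List α} {p : α → Bool} {d : α}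
    {J : ℕ → ℕ} (hl : l.Nodup) (hJ : StrictMono J)
    (hpos : ∀ i < (l.filter p).length, J i < l.length ∧ (l.filter p).getD i d = l.getD (J i) d)
    {k m : ℕ} (hkm : J k < m) (hmk : m < J (k + 1)) (hm : m < l.length) :
    p (l.getD m d) = false := by
  rw [List.getD_eq_getElem _ _ hm, Bool.eq_false_iff]
  intro h
  obtain ⟨i, hi, hieq⟩ := List.mem_iff_getElem.1 (List.mem_filter.2 ⟨List.getElem_mem hm, h⟩)
  obtain ⟨hJi, hfi⟩ := hpos i hi
  rw [List.getD_eq_getElem _ _ hi, List.getD_eq_getElem _ _ hJi, hieq, hl.getElem_inj_iff] at hfi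
  subst hfi
  have := hJ.lt_iff_lt.1 hkm
  have := hJ.lt_iff_lt.1 hmk
  omega

namespace PTree

@[elab_as_elim]
theorem consInduction {motive : PTree → Prop} (leaf : motive (node []))
    (cons : ∀ t ts, motive t → motive (node ts) → motive (node (t :: ts))) : ∀ T, motive T
  | node [] => leaf
  | node (t :: ts) => cons t ts (consInduction leaf cons t) (consInduction leaf cons (node ts))

theorem size_pos : ∀ t : PTree, 0 < size t
  | node _ => by rw [size]; omega

theorem size_cons (t : PTree) (ts : List PTree) :
    size (node (t :: ts)) = size t + size (node ts) := by
  simp only [size, sizeList]; omega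

theorem size_pair (A C : PTree) : size (node [A, C]) = size A + size C + 1 := by
  simp only [size, sizeList]; omega

theorem rot_leaf : rot (node []) = node [] := by
  rw [rot]

theorem rot_cons (t : PTree) (ts : List PTree) :
    rot (node (t :: ts)) = node [rot t, rot (node ts)] := by
  rw [rot]

theorem size_rot (T : PTree) : size (rot T) + 1 = 2 * size T := by
  induction T using consInduction with
  | leaf => rw [rot_leaf]; rfl
  | cons t ts ht hts => rw [rot_cons, size_pair, size_cons]; omega

mutual
theorem length_heightsAux : ∀ (t : PTree) (d : ℕ), (heightsAux t d).length = size t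
  | node ts, d => by
    rw [heightsAux, size, List.length_cons, length_heightsListAux ts (d + 1)]; omega
theorem length_heightsListAux : ∀ (ts : List PTree) (d : ℕ),
    (heightsListAux ts d).length = sizeList ts
  | [], _ => rfl
  | t :: ts, d => by
    rw [heightsListAux, sizeList, List.length_append, length_heightsAux t d,
      length_heightsListAux ts d]
end

mutual
theorem heightsAux_succ : ∀ (t : PTree) (d : ℕ),
    heightsAux t (d + 1) = (heightsAux t d).map (· + 1)
  | node ts, d => by rw [heightsAux, heightsAux, List.map_cons, heightsListAux_succ ts (d + 1)]
theorem heightsListAux_succ : ∀ (ts : List PTree) (d : ℕ),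
    heightsListAux ts (d + 1) = (heightsListAux ts d).map (· + 1)
  | [], _ => rfl
  | t :: ts, d => by
    rw [heightsListAux, heightsListAux, List.map_append, heightsAux_succ t d,
      heightsListAux_succ ts d]
end

mutual
theorem le_of_mem_heightsAux : ∀ (t : PTree) (d : ℕ), ∀ x ∈ heightsAux t d, d ≤ x
  | node ts, d => by
    rw [heightsAux]
    simp only [List.mem_cons]
    rintro x (rfl | hx)
    · exact le_rfl
    · exact (le_of_mem_heightsListAux ts (d + 1) x hx).trans' (Nat.le_succ d)
theorem le_of_mem_heightsListAux : ∀ (ts : List PTree) (d : ℕ), ∀ x ∈ heightsListAux ts d, d ≤ x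
  | [], _ => by simp [heightsListAux]
  | t :: ts, d => by
    rw [heightsListAux]
    intro x hx
    rcases List.mem_append.1 hx with hx | hx
    · exact le_of_mem_heightsAux t d x hx
    · exact le_of_mem_heightsListAux ts d x hx
end

theorem head?_heightsListAux {ts : List PTree} (hts : ts ≠ []) (d : ℕ) :
    (heightsListAux ts d).head? = some d := by
  obtain ⟨⟨us⟩, ts, rfl⟩ := List.exists_cons_of_ne_nil hts
  simp [heightsListAux, heightsAux]

mutual
theorem isChain_heightsAux : ∀ (t : PTree) (d : ℕ),
    List.IsChain (fun a b => b ≤ a + 1) (heightsAux t d)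
  | node ts, d => by
    rw [heightsAux]
    rcases eq_or_ne ts [] with rfl | hts
    · simp [heightsListAux]
    refine List.isChain_cons.2 ⟨fun y hy => ?_, isChain_heightsListAux ts (d + 1)⟩
    rw [head?_heightsListAux hts] at hy
    cases hy; exact le_rfl
theorem isChain_heightsListAux : ∀ (ts : List PTree) (d : ℕ),
    List.IsChain (fun a b => b ≤ a + 1) (heightsListAux ts d)
  | [], _ => by simp [heightsListAux]
  | t :: ts, d => by
    rw [heightsListAux]
    refine (isChain_heightsAux t d).append (isChain_heightsListAux ts d) fun x hx y hy => ?_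
    rcases eq_or_ne ts [] with rfl | hts
    · simp [heightsListAux] at hy
    rw [head?_heightsListAux hts] at hy
    cases hy
    exact (le_of_mem_heightsAux t d x (List.mem_of_mem_getLast? hx)).trans (Nat.le_succ x)
end

theorem H_zero (t : PTree) : H t 0 = 0 := by
  cases t; rfl

theorem H_of_size_le (t : PTree) {k : ℕ} (h : size t ≤ k) : H t k = 0 :=
  List.getD_eq_default _ _ (by rwa [length_heightsAux])

theorem H_succ_le (t : PTree) (k : ℕ) : H t (k + 1) ≤ H t k + 1 := by
  by_cases h : k + 1 < size t
  · have hl : k + 1 < (heightsAux t 0).length := by rwa [length_heightsAux]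
    unfold H
    rw [List.getD_eq_getElem _ _ hl, List.getD_eq_getElem _ _ (by omega)]
    exact List.isChain_iff_getElem.1 (isChain_heightsAux t 0) k hl
  · rw [H_of_size_le t (by omega)]; omega

theorem H_le_self (t : PTree) (k : ℕ) : H t k ≤ k := by
  induction k with
  | zero => rw [H_zero]
  | succ k ih => have := H_succ_le t k; omega

theorem H_cons_succ (t : PTree) (ts : List PTree) {p : ℕ} (hp : p < size t) :
    H (node (t :: ts)) (p + 1) = H t p + 1 := by
  have hp' : p < (heightsAux t 0).length := by rwa [length_heightsAux]
  unfold H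
  rw [heightsAux, List.getD_cons_succ, heightsListAux, List.getD_append _ _ _ _ (by simpa
    [length_heightsAux] using hp), heightsAux_succ, List.getD_eq_getElem _ _ (by simpa using hp'),
    List.getD_eq_getElem _ _ hp', List.getElem_map]

theorem H_cons_size_add (t : PTree) (ts : List PTree) {q : ℕ} (hq : 0 < q) :
    H (node (t :: ts)) (size t + q) = H (node ts) q := by
  obtain ⟨q, rfl⟩ : ∃ q', q = q' + 1 := ⟨q - 1, by omega⟩
  unfold H
  rw [← Nat.add_assoc, heightsAux, heightsAux,
    List.getD_cons_succ, heightsListAux, List.getD_append_right _ _ _ _ (by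
      rw [length_heightsAux]; omega), length_heightsAux, Nat.add_sub_cancel_left,
    List.getD_cons_succ]

theorem H_one {T : PTree} (hT : 2 ≤ size T) : H T 1 = 1 := by
  obtain ⟨_ | ⟨t, ts⟩⟩ := T
  · simp [size, sizeList] at hT
  · rw [H_cons_succ t ts (size_pos t), H_zero]

mutual
theorem length_verticesAux : ∀ (t : PTree) (p : List ℕ), (verticesAux t p).length = size t
  | node ts, p => by
    rw [verticesAux, size, List.length_cons, length_verticesListAux ts p 0]; omega
theorem length_verticesListAux : ∀ (ts : List PTree) (p : List ℕ) (i : ℕ),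
    (verticesListAux ts p i).length = sizeList ts
  | [], _, _ => rfl
  | t :: ts, p, i => by
    rw [verticesListAux, sizeList, List.length_append, length_verticesAux t _,
      length_verticesListAux ts p (i + 1)]
end

theorem length_vertices (T : PTree) : (vertices T).length = size T :=
  length_verticesAux T []

theorem getD_vertices_zero (T : PTree) : (vertices T).getD 0 [] = [] := by
  cases T; rfl

mutual
theorem verticesAux_eq_map_append : ∀ (t : PTree) (p : List ℕ),
    verticesAux t p = (verticesAux t []).map (p ++ ·)
  | node ts, p => by
    rw [verticesAux, verticesAux, List.map_cons, verticesListAux_eq_map_append ts p 0,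
      List.append_nil]
theorem verticesListAux_eq_map_append : ∀ (ts : List PTree) (p : List ℕ) (i : ℕ),
    verticesListAux ts p i = (verticesListAux ts [] i).map (p ++ ·)
  | [], _, _ => rfl
  | t :: ts, p, i => by
    rw [verticesListAux, verticesListAux, List.map_append, verticesAux_eq_map_append t (p ++ [i]),
      verticesAux_eq_map_append t ([] ++ [i]), verticesListAux_eq_map_append ts p (i + 1),
      verticesListAux_eq_map_append ts [] (i + 1)]
    simp [Function.comp_def]
end

mutual
theorem heightsAux_eq_map_length : ∀ (t : PTree) (p : List ℕ),
    heightsAux t p.length = (verticesAux t p).map List.length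
  | node ts, p => by
    rw [heightsAux, verticesAux, List.map_cons, heightsListAux_eq_map_length ts p 0]
theorem heightsListAux_eq_map_length : ∀ (ts : List PTree) (p : List ℕ) (i : ℕ),
    heightsListAux ts (p.length + 1) = (verticesListAux ts p i).map List.length
  | [], _, _ => rfl
  | t :: ts, p, i => by
    rw [heightsListAux, verticesListAux, List.map_append, ← heightsListAux_eq_map_length ts p,
      ← heightsAux_eq_map_length t (p ++ [i]), List.length_append, List.length_singleton]
end

theorem H_eq_length_getD_vertices (T : PTree) (m : ℕ) :
    H T m = ((vertices T).getD m []).length := by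
  rw [H, vertices, ← List.length_nil, heightsAux_eq_map_length, List.length_nil,
    ← List.length_nil, List.getD_map]

theorem vertices_pair (A C : PTree) :
    vertices (node [A, C]) = [] :: ((vertices A).map (0 :: ·) ++ (vertices C).map (1 :: ·)) := by
  rw [vertices, verticesAux, verticesListAux, verticesListAux, verticesListAux, List.append_nil,
    verticesAux_eq_map_append A, verticesAux_eq_map_append C]
  rfl

theorem isInternal_pair_nil (A C : PTree) : isInternal (node [A, C]) [] = true := rfl

theorem isInternal_pair_cons_zero (A C : PTree) (p : List ℕ) :
    isInternal (node [A, C]) (0 :: p) = isInternal A p := by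
  simp [isInternal, subtreeAt]

theorem isInternal_pair_cons_one (A C : PTree) (p : List ℕ) :
    isInternal (node [A, C]) (1 :: p) = isInternal C p := by
  simp [isInternal, subtreeAt]

theorem internalVertices_pair (A C : PTree) :
    internalVertices (node [A, C]) =
      [] :: ((internalVertices A).map (0 :: ·) ++ (internalVertices C).map (1 :: ·)) := by
  rw [internalVertices, internalVertices, internalVertices, vertices_pair,
    List.filter_cons_of_pos (isInternal_pair_nil A C), List.filter_append, List.filter_map,
    List.filter_map]
  simp only [Function.comp_def, isInternal_pair_cons_zero, isInternal_pair_cons_one]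

theorem getD_vertices_pair_succ (A C : PTree) {p : ℕ} (hp : p < size A) :
    (vertices (node [A, C])).getD (p + 1) [] = 0 :: (vertices A).getD p [] := by
  rw [vertices_pair]
  exact List.getD_cons_map_append_map_succ _ _ _ _ (by rwa [length_vertices]) _ _

theorem getD_vertices_pair_add (A C : PTree) {q : ℕ} (hq : q < size C) :
    (vertices (node [A, C])).getD (size A + 1 + q) [] = 1 :: (vertices C).getD q [] := by
  rw [vertices_pair, ← length_vertices A]
  exact List.getD_cons_map_append_map_add _ _ _ _ (by rwa [length_vertices]) _ _

theorem getD_internalVertices_pair_succ (A C : PTree) {p : ℕ}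
    (hp : p < (internalVertices A).length) :
    (internalVertices (node [A, C])).getD (p + 1) [] = 0 :: (internalVertices A).getD p [] := by
  rw [internalVertices_pair]
  exact List.getD_cons_map_append_map_succ _ _ _ _ hp _ _

theorem getD_internalVertices_pair_add (A C : PTree) {q : ℕ}
    (hq : q < (internalVertices C).length) :
    (internalVertices (node [A, C])).getD ((internalVertices A).length + 1 + q) [] =
      1 :: (internalVertices C).getD q [] := by
  rw [internalVertices_pair]
  exact List.getD_cons_map_append_map_add _ _ _ _ hq _ _

theorem internalVertices_leaf : internalVertices (node []) = [] := rfl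

theorem length_internalVertices_rot (T : PTree) :
    (internalVertices (rot T)).length + 1 = size T := by
  induction T using consInduction with
  | leaf => rw [rot_leaf, internalVertices_leaf]; rfl
  | cons t ts ht hts =>
    rw [rot_cons, internalVertices_pair, size_cons]
    simp only [List.length_cons, List.length_append, List.length_map]
    omega

inductive IsBinary : PTree → Prop
  | leaf : IsBinary (node [])
  | pair {A C : PTree} : IsBinary A → IsBinary C → IsBinary (node [A, C])

theorem isBinary_rot (T : PTree) : IsBinary (rot T) := by
  induction T using consInduction with
  | leaf => rw [rot_leaf]; exact .leaf
  | cons t ts ht hts => rw [rot_cons]; exact .pair ht hts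

section Binary

variable {B : PTree}

theorem IsBinary.isInternal_nil (hB : IsBinary B) (h : 2 ≤ size B) : isInternal B [] = true := by
  cases hB with
  | leaf => simp [size, sizeList] at h
  | pair => rfl

theorem IsBinary.getD_vertices_ne_nil (hB : IsBinary B) {m : ℕ} (h0 : 0 < m)
    (hm : m < size B) : (vertices B).getD m [] ≠ [] := by
  cases hB with
  | leaf => simp [size, sizeList] at hm; omega
  | @pair A C _ _ =>
    rw [size_pair] at hm
    obtain ⟨p, rfl⟩ : ∃ p, m = p + 1 := ⟨m - 1, by omega⟩
    rcases lt_or_ge p (size A) with hp | hp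
    · rw [getD_vertices_pair_succ A C hp]; exact List.cons_ne_nil _ _
    · rw [show p + 1 = size A + 1 + (p - size A) by omega,
        getD_vertices_pair_add A C (by omega)]
      exact List.cons_ne_nil _ _

theorem IsBinary.nodup_vertices (hB : IsBinary B) : (vertices B).Nodup := by
  induction hB with
  | leaf => exact List.nodup_singleton _
  | @pair A C _ _ hA hC =>
    rw [vertices_pair, List.nodup_cons]
    refine ⟨by simp, (hA.map List.cons_injective).append (hC.map List.cons_injective) ?_⟩
    simp [List.disjoint_left]

/-- What the lexicographic successor `w` of a vertex `v` of a full binary tree looks like;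
`w = []` also stands for the end of the enumeration, where `getD` returns its default. -/
def IsLexSucc (B : PTree) (v w : List ℕ) : Prop :=
  (isInternal B v = true → w = v ++ [0]) ∧
  (isInternal B v = false → v.getLast? = some 0 → w = v.dropLast ++ [1]) ∧
  (isInternal B v = false → v ≠ [] → v.getLast? ≠ some 0 →
    w.length < v.length ∧ (w ≠ [] → w.getLast? ≠ some 0))

theorem IsLexSucc.cons {S : PTree} {i : ℕ} (hS : ∀ p, isInternal B (i :: p) = isInternal S p)
    {v w : List ℕ} (h : IsLexSucc S v w) (hv : v = [] → isInternal S v = true) (hw : w ≠ []) :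
    IsLexSucc B (i :: v) (i :: w) := by
  obtain ⟨h₁, h₂, h₃⟩ := h
  simp only [IsLexSucc, hS]
  refine ⟨fun hi => by rw [h₁ hi, List.cons_append], fun hi hl => ?_, fun hi _ hl => ?_⟩
  all_goals
    have hv' : v ≠ [] := fun h => by simp [hv h] at hi
    rw [List.getLast?_cons_of_ne_nil hv'] at hl
  · rw [h₂ hi hl, List.dropLast_cons_of_ne_nil hv', List.cons_append]
  · obtain ⟨hlen, hlast⟩ := h₃ hi hv' hl
    exact ⟨by simpa using hlen, fun _ => by rw [List.getLast?_cons_of_ne_nil hw]; exact hlast hw⟩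

theorem IsLexSucc.pair_zero_one {A C : PTree} {x : List ℕ} (h : IsLexSucc A x []) :
    IsLexSucc (node [A, C]) (0 :: x) [1] := by
  obtain ⟨h₁, h₂, -⟩ := h
  have hx : isInternal A x = false := by
    cases hi : isInternal A x
    · rfl
    · simpa using h₁ hi
  simp only [IsLexSucc, isInternal_pair_cons_zero, hx]
  refine ⟨nofun, fun _ hl => ?_, fun _ _ hl => ?_⟩
  · rcases eq_or_ne x [] with rfl | hne
    · rfl
    · rw [List.getLast?_cons_of_ne_nil hne] at hl; simpa using h₂ hx hl
  · rcases eq_or_ne x [] with rfl | hne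
    · simp at hl
    · exact ⟨by simp [List.length_pos_iff.2 hne], by simp⟩

theorem IsLexSucc.pair_one_nil {A C : PTree} {x : List ℕ} (h : IsLexSucc C x []) :
    IsLexSucc (node [A, C]) (1 :: x) [] := by
  obtain ⟨h₁, h₂, -⟩ := h
  simp only [IsLexSucc, isInternal_pair_cons_one]
  refine ⟨fun hi => by simpa using h₁ hi, fun hi hl => ?_, fun _ _ _ => by simp⟩
  rcases eq_or_ne x [] with rfl | hne
  · simp at hl
  · rw [List.getLast?_cons_of_ne_nil hne] at hl; simpa using h₂ hi hl

theorem IsBinary.isLexSucc_getD_vertices (hB : IsBinary B) {m : ℕ} (hm : m < size B) :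
    IsLexSucc B ((vertices B).getD m []) ((vertices B).getD (m + 1) []) := by
  induction hB generalizing m with
  | leaf =>
    obtain rfl : m = 0 := by simpa [size, sizeList] using hm
    exact ⟨nofun, nofun, fun _ h => absurd rfl h⟩
  | @pair A C hA hC ihA ihC =>
    rw [size_pair] at hm
    rcases m with _ | p
    · rw [getD_vertices_zero, getD_vertices_pair_succ A C (size_pos A), getD_vertices_zero]
      exact ⟨fun _ => rfl, nofun, nofun⟩
    rcases lt_trichotomy (p + 1) (size A) with hp | hp | hp
    · rw [getD_vertices_pair_succ A C hp, getD_vertices_pair_succ A C (by omega)]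
      refine (ihA (by omega)).cons (isInternal_pair_cons_zero A C) (fun h => ?_)
        (hA.getD_vertices_ne_nil (by omega) hp)
      rw [h]; exact hA.isInternal_nil (by omega)
    · have hlast := ihA (m := p) (by omega)
      rw [hp, List.getD_eq_default (n := size A) _ _ (by rw [length_vertices])] at hlast
      rw [getD_vertices_pair_succ A C (by omega), hp, ← Nat.add_zero (size A + 1),
        getD_vertices_pair_add A C (size_pos C), getD_vertices_zero]
      exact hlast.pair_zero_one
    obtain ⟨q, rfl⟩ : ∃ q, p = size A + q := ⟨p - size A, by omega⟩
    rw [Nat.add_right_comm, getD_vertices_pair_add A C (q := q) (by omega)]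
    rcases lt_or_eq_of_le (show q + 1 ≤ size C by omega) with hq | hq
    · rw [Nat.add_assoc, getD_vertices_pair_add A C hq]
      refine (ihC (by omega)).cons (isInternal_pair_cons_one A C) (fun h => ?_)
        (hC.getD_vertices_ne_nil (by omega) hq)
      rw [h]; exact hC.isInternal_nil (by omega)
    · have hlast := ihC (m := q) (by omega)
      rw [hq, List.getD_eq_default (n := size C) _ _ (by rw [length_vertices])] at hlast
      rw [List.getD_eq_default (n := size A + 1 + q + 1) _ _
        (by rw [length_vertices, size_pair]; omega)]
      exact hlast.pair_one_nil

theorem IsBinary.heightsListAux_internalList_cons (hB : IsBinary B) (l : List PTree) (d : ℕ) :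
    heightsListAux (internalList (B :: l)) d =
      (internalVertices B).map (·.length + d) ++ heightsListAux (internalList l) d := by
  induction hB generalizing l d with
  | leaf => rw [internalList, internalVertices_leaf]; rfl
  | @pair A C _ _ hA hC =>
    simp [internalList, internalTree, heightsListAux, heightsAux, hA, hC, internalVertices_pair,
      Function.comp_def, Nat.add_assoc, Nat.add_comm 1 d]

theorem IsBinary.H_internalTree (hB : IsBinary B) (h : 2 ≤ size B) (k : ℕ) :
    H (internalTree B) k = ((internalVertices B).getD k []).length := by
  cases hB with
  | leaf => simp [size, sizeList] at h
  | @pair A C hA hC =>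
    have := (IsBinary.pair hA hC).heightsListAux_internalList_cons [] 0
    simp only [internalList, heightsListAux, List.append_nil] at this
    rw [H, this]
    simpa using List.getD_map (l := internalVertices _) (d := []) (n := k) List.length

end Binary

theorem IsBinary.H_block {B : PTree} (hB : IsBinary B) {a b : ℕ} (hab : a < b)
    (hb : b ≤ size B) (ha : isInternal B ((vertices B).getD a []) = true)
    (hleaf : ∀ m, a < m → m < b → isInternal B ((vertices B).getD m []) = false) :
    H B (a + 1) = H B a + 1 ∧
      (a + 2 ≤ b → H B (a + 2) = H B a + 1 ∧ StrictAntiOn (H B) (Set.Icc (a + 2) b)) := by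
  set v : ℕ → List ℕ := fun m => (vertices B).getD m []
  have hH : ∀ m, H B m = (v m).length := H_eq_length_getD_vertices B
  have hsucc : ∀ m, m < size B → IsLexSucc B (v m) (v (m + 1)) :=
    fun _ hm => hB.isLexSucc_getD_vertices hm
  have hfirst : v (a + 1) = v a ++ [0] := (hsucc a (by omega)).1 ha
  refine ⟨by simp [hH, hfirst], fun hab2 => ?_⟩
  have hsecond : v (a + 2) = v a ++ [1] := by
    rw [(hsucc (a + 1) (by omega)).2.1 (hleaf _ (by omega) (by omega)) (by simp [hfirst]),
      hfirst, List.dropLast_concat]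
  have hroot : isInternal B [] = true := hB.isInternal_nil (by omega)
  have hlater : ∀ m, a + 2 ≤ m → m < b → v m ≠ [] ∧ (v m).getLast? ≠ some 0 := by
    intro m hm hmb
    induction m, hm using Nat.le_induction with
    | base => simp [hsecond]
    | succ m hm ih =>
      have hne : v (m + 1) ≠ [] := fun h => by
        have := hleaf (m + 1) (by omega) hmb
        rw [show (vertices B).getD (m + 1) [] = [] from h, hroot] at this
        exact Bool.noConfusion this
      obtain ⟨hne', hlast⟩ := ih (by omega)
      exact ⟨hne, ((hsucc m (by omega)).2.2 (hleaf m (by omega) (by omega)) hne' hlast).2 hne⟩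
  refine ⟨by simp [hH, hsecond], strictAntiOn_of_add_one_lt Set.ordConnected_Icc
    fun m _ hm hm1 => ?_⟩
  simp only [Set.mem_Icc] at hm hm1
  obtain ⟨hne, hlast⟩ := hlater m hm.1 (by omega)
  rw [hH, hH]
  exact ((hsucc m (by omega)).2.2 (hleaf m (by omega) (by omega)) hne hlast).1

/-- The paper's `j`. -/
def rotIndex (T : PTree) (k : ℕ) : ℕ := 2 * k + 1 - H T (k + 1)

theorem rotIndex_le (T : PTree) (k : ℕ) : rotIndex T k ≤ 2 * k + 1 := Nat.sub_le _ _

theorem rotIndex_strictMono (T : PTree) : StrictMono (rotIndex T) :=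
  strictMono_nat_of_lt_succ fun k => by
    have := H_succ_le T (k + 1)
    have := H_le_self T (k + 1)
    unfold rotIndex
    omega

theorem rotIndex_zero {T : PTree} (hT : 2 ≤ size T) : rotIndex T 0 = 0 := by
  rw [rotIndex, H_one hT]

theorem rotIndex_size_sub_one (T : PTree) : rotIndex T (size T - 1) = 2 * size T - 1 := by
  have := size_pos T
  rw [rotIndex, Nat.sub_add_cancel this, H_of_size_le T le_rfl]
  omega

theorem rotIndex_cons_succ (t : PTree) (ts : List PTree) {k : ℕ} (hk : k + 1 < size t) :
    rotIndex (node (t :: ts)) (k + 1) = rotIndex t k + 1 := by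
  have := H_le_self t (k + 1)
  rw [rotIndex, rotIndex, H_cons_succ t ts hk]
  omega

theorem rotIndex_cons_size_add (t : PTree) (ts : List PTree) (r : ℕ) :
    rotIndex (node (t :: ts)) (size t + r) = 2 * size t + rotIndex (node ts) r := by
  have := H_le_self (node ts) (r + 1)
  rw [rotIndex, rotIndex, Nat.add_assoc, H_cons_size_add t ts (by omega : 0 < r + 1)]
  omega

theorem getD_internalVertices_rot (T : PTree) {k : ℕ} (hk : k + 2 ≤ size T) :
    (internalVertices (rot T)).getD k [] = (vertices (rot T)).getD (rotIndex T k) [] := by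
  induction T using consInduction generalizing k with
  | leaf => simp [size, sizeList] at hk
  | cons t ts ht hts =>
    have hsize := size_cons t ts
    have hrot := size_rot t
    have hiv := length_internalVertices_rot t
    rw [rot_cons]
    rcases k with _ | k
    · rw [rotIndex_zero (by omega), getD_vertices_zero, internalVertices_pair]; rfl
    rcases lt_or_ge (k + 1) (size t) with hkt | hkt
    · have := rotIndex_le t k
      rw [rotIndex_cons_succ t ts hkt, getD_internalVertices_pair_succ _ _ (by omega),
        getD_vertices_pair_succ _ _ (by omega), ht (by omega)]
    · obtain ⟨r, hr⟩ : ∃ r, k + 1 = size t + r := ⟨k + 1 - size t, by omega⟩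
      have := rotIndex_le (node ts) r
      have := length_internalVertices_rot (node ts)
      have := size_rot (node ts)
      rw [hr, rotIndex_cons_size_add, show size t + r = (internalVertices (rot t)).length + 1 + r
        by omega, getD_internalVertices_pair_add _ _ (by omega),
        show 2 * size t + rotIndex (node ts) r = size (rot t) + 1 + rotIndex (node ts) r by omega,
        getD_vertices_pair_add _ _ (by omega), hts (by omega)]

theorem isInternal_getD_vertices_rot_of_between (T : PTree) {k m : ℕ} (hk : k + 2 ≤ size T)
    (hkm : rotIndex T k < m) (hmk : m < rotIndex T (k + 1)) :
    isInternal (rot T) ((vertices (rot T)).getD m []) = false := by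
  have hrot := size_rot T
  have hiv := length_internalVertices_rot T
  have := rotIndex_le T (k + 1)
  refine List.getD_eq_false_of_between_filter (isBinary_rot T).nodup_vertices
    (rotIndex_strictMono T) (fun i hi => ?_) hkm hmk (by rw [length_vertices]; omega)
  change i < (internalVertices (rot T)).length at hi
  have := rotIndex_le T i
  exact ⟨by rw [length_vertices]; omega, getD_internalVertices_rot T (by omega)⟩

theorem H_internalTree_rot {T : PTree} (hT : 2 ≤ size T) {k : ℕ} (hk : k + 1 ≤ size T) :
    H (internalTree (rot T)) k = H (rot T) (rotIndex T k) := by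
  have hrot := size_rot T
  rw [(isBinary_rot T).H_internalTree (by omega)]
  rcases lt_or_eq_of_le hk with hk | hk
  · rw [getD_internalVertices_rot T hk, H_eq_length_getD_vertices]
  · have := length_internalVertices_rot T
    obtain rfl : k = size T - 1 := by omega
    rw [List.getD_eq_default _ _ (by omega), rotIndex_size_sub_one,
      H_of_size_le _ (by omega), List.length_nil]

theorem H_rot_block {T : PTree} (hT : 2 ≤ size T) {k : ℕ} (hk : k + 2 ≤ size T) :
    let a := rotIndex T k
    let b := rotIndex T (k + 1)
    (b = a + 1 →
      H (rot T) a = H (internalTree (rot T)) k ∧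
      H (rot T) (a + 1) = H (internalTree (rot T)) (k + 1)) ∧
    (b = a + 2 →
      H (rot T) a = H (internalTree (rot T)) k ∧
      H (rot T) (a + 1) = H (internalTree (rot T)) (k + 1) ∧
      H (rot T) (a + 2) = H (internalTree (rot T)) (k + 1)) ∧
    (a + 2 < b →
      H (rot T) a = H (internalTree (rot T)) k ∧
      H (rot T) (a + 1) = H (internalTree (rot T)) k + 1 ∧
      H (rot T) (a + 2) = H (internalTree (rot T)) k + 1 ∧
      StrictAntiOn (fun m => H (rot T) m) (Set.Icc (a + 2) b) ∧
      H (rot T) b = H (internalTree (rot T)) (k + 1)) := by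
  intro a b
  have hab : a < b := rotIndex_strictMono T (lt_add_one k)
  have hb : b ≤ size (rot T) := by
    have hmono := (rotIndex_strictMono T).monotone (show k + 1 ≤ size T - 1 by omega)
    have := size_rot T
    rw [rotIndex_size_sub_one] at hmono
    omega
  have ha : isInternal (rot T) ((vertices (rot T)).getD a []) = true := by
    have hlen := length_internalVertices_rot T
    rw [← getD_internalVertices_rot T hk, List.getD_eq_getElem _ _ (by omega)]
    exact (List.mem_filter.1 (List.getElem_mem _)).2
  obtain ⟨hfirst, hrest⟩ := (isBinary_rot T).H_block hab hb ha
    fun m => isInternal_getD_vertices_rot_of_between T hk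
  have hHa : H (rot T) a = H (internalTree (rot T)) k := (H_internalTree_rot hT (by omega)).symm
  have hHb : H (rot T) b = H (internalTree (rot T)) (k + 1) :=
    (H_internalTree_rot hT (by omega)).symm
  refine ⟨fun hgap => ⟨hHa, hgap ▸ hHb⟩, fun hgap => ?_, fun hgap => ?_⟩
  · obtain ⟨hsecond, -⟩ := hrest hgap.ge
    exact ⟨hHa, by rw [hfirst, ← hsecond, ← hgap, hHb], hgap ▸ hHb⟩
  · obtain ⟨hsecond, hanti⟩ := hrest hgap.le
    exact ⟨hHa, by rw [hfirst, hHa], by rw [hsecond, hHa], hanti, hHb⟩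

end PTree

open PTree

theorem stmt16 (T : PTree) (hT : 2 ≤ size T) :
    (∀ k l : ℕ, k < l → l ≤ size T - 1 →
      2 * k + 1 - H T (k + 1) < 2 * l + 1 - H T (l + 1)) ∧
    (2 * 0 + 1 - H T (0 + 1) = 0) ∧
    (2 * (size T - 1) + 1 - H T (size T - 1 + 1) = 2 * size T - 1) ∧
    (∀ k ≤ size T - 2,
      (internalVertices (rot T)).getD k [] =
        (vertices (rot T)).getD (2 * k + 1 - H T (k + 1)) []) ∧
    (∀ k ≤ size T - 2,
      (2 * (k + 1) + 1 - H T (k + 2) = (2 * k + 1 - H T (k + 1)) + 1 →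
        H (rot T) (2 * k + 1 - H T (k + 1)) = H (internalTree (rot T)) k ∧
        H (rot T) (2 * k + 1 - H T (k + 1) + 1) = H (internalTree (rot T)) (k + 1)) ∧
      (2 * (k + 1) + 1 - H T (k + 2) = (2 * k + 1 - H T (k + 1)) + 2 →
        H (rot T) (2 * k + 1 - H T (k + 1)) = H (internalTree (rot T)) k ∧
        H (rot T) (2 * k + 1 - H T (k + 1) + 1) = H (internalTree (rot T)) (k + 1) ∧
        H (rot T) (2 * k + 1 - H T (k + 1) + 2) = H (internalTree (rot T)) (k + 1)) ∧
      ((2 * k + 1 - H T (k + 1)) + 2 < 2 * (k + 1) + 1 - H T (k + 2) →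
        H (rot T) (2 * k + 1 - H T (k + 1)) = H (internalTree (rot T)) k ∧
        H (rot T) (2 * k + 1 - H T (k + 1) + 1) = H (internalTree (rot T)) k + 1 ∧
        H (rot T) (2 * k + 1 - H T (k + 1) + 2) = H (internalTree (rot T)) k + 1 ∧
        StrictAntiOn (fun m => H (rot T) m)
          (Set.Icc (2 * k + 1 - H T (k + 1) + 2) (2 * (k + 1) + 1 - H T (k + 2))) ∧
        H (rot T) (2 * (k + 1) + 1 - H T (k + 2)) = H (internalTree (rot T)) (k + 1))) :=
  ⟨fun _ _ hkl _ => rotIndex_strictMono T hkl, rotIndex_zero hT, rotIndex_size_sub_one T,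
    fun _ hk => getD_internalVertices_rot T (by omega), fun _ hk => H_rot_block hT (by omega)⟩
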